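/- The $(T+1)\times(T+1)$ block matrix $\Sigma = \begin{bmatrix}\sigma_\mu^2 & \tilde\tau\sigma_\mu\sigma_x e' \\ \tilde\tau\sigma_\mu\sigma_x e & \sigma_x^2 G\end{bmatrix}$, with $G = (1-\rho)I_T + \rho ee'$, $\sigma_\mu, \sigma_x > 0$, $\rho \in (-1/(T-1),1)$, is positive definite if and only if $\tilde\tau^2 T < 1 + (T-1)\rho$. -/

import Mathlib

/-!
Since the top-left entry `σμ²` is positive, the Schur complement criterion reduces positive
definiteness of `Σ` to that of `σx² G - τ̃² σx² e e' = σx² ((1 - ρ) I + (ρ - τ̃²) e e')`.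
A matrix `a I + b v v'` with `a > 0` is positive definite iff `a + b |v|² > 0`: necessity by
testing against `v`, sufficiency by Cauchy–Schwarz, `(v ⬝ x)² ≤ |v|² |x|²`. For `v = e` we have
`|e|² = T`, which gives the stated inequality.
-/

open Matrix

namespace Matrix

theorem posDef_submatrix_equiv {m n R : Type*} [Ring R] [PartialOrder R] [StarRing R]
    {M : Matrix n n R} (e : m ≃ n) : (M.submatrix e e).PosDef ↔ M.PosDef :=
  ⟨fun h => by simpa using h.submatrix e.symm.injective, fun h => h.submatrix e.injective⟩

theorem PosDef.fromBlocks₁₁_iff {m n K : Type*} [Fintype m] [Fintype n] [DecidableEq m]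
    [Field K] [PartialOrder K] [StarRing K] [StarOrderedRing K]
    {A : Matrix m m K} (B : Matrix m n K) (D : Matrix n n K) (hA : A.PosDef) :
    (fromBlocks A B Bᴴ D).PosDef ↔ (D - Bᴴ * A⁻¹ * B).PosDef := by
  let _ := hA.isUnit.invertible
  have quad (x : m → K) (y : n → K) : star (x ⊕ᵥ y) ⬝ᵥ (fromBlocks A B Bᴴ D *ᵥ (x ⊕ᵥ y)) =
      star (x + (A⁻¹ * B) *ᵥ y) ⬝ᵥ (A *ᵥ (x + (A⁻¹ * B) *ᵥ y)) +
        star y ⬝ᵥ ((D - Bᴴ * A⁻¹ * B) *ᵥ y) := by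
    simp only [dotProduct_mulVec, schur_complement_eq₁₁ B D _ _ hA.1]
  simp only [posDef_iff_dotProduct_mulVec, IsHermitian.fromBlocks₁₁ _ _ hA.1, and_congr_right_iff]
  intro _
  constructor
  · intro h y hy
    have := h (x := -((A⁻¹ * B) *ᵥ y) ⊕ᵥ y) fun h0 => hy (funext fun j => congrFun h0 (.inr j))
    rwa [quad, neg_add_cancel, star_zero, zero_dotProduct, zero_add] at this
  · intro h v hv
    rw [← Sum.elim_comp_inl_inr v, quad]
    obtain hy | hy := eq_or_ne (v ∘ Sum.inr) 0
    · refine lt_add_of_pos_of_le (hA.dotProduct_mulVec_pos ?_) (by simp [hy])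
      rw [hy, mulVec_zero, add_zero]
      intro hx
      exact hv (by rw [← Sum.elim_comp_inl_inr v, hx, hy, Sum.elim_zero_zero])
    · exact add_pos_of_nonneg_of_pos (hA.posSemidef.dotProduct_mulVec_nonneg _) (h hy)

section RankOneUpdate

variable {ι : Type*} [Fintype ι] [DecidableEq ι]

theorem dotProduct_smul_one_add_smul_vecMulVec_mulVec (a b : ℝ) (v x : ι → ℝ) :
    x ⬝ᵥ ((a • 1 + b • vecMulVec v v) *ᵥ x) = a * (x ⬝ᵥ x) + b * (v ⬝ᵥ x) ^ 2 := by
  simp only [add_mulVec, smul_mulVec, one_mulVec, vecMulVec_mulVec, dotProduct_comm v x,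
    op_smul_eq_smul, dotProduct_add, dotProduct_smul, smul_eq_mul]
  ring

theorem posDef_smul_one_add_smul_vecMulVec_iff {a : ℝ} (ha : 0 < a) (b : ℝ) (v : ι → ℝ) :
    (a • 1 + b • vecMulVec v v).PosDef ↔ 0 < a + b * (v ⬝ᵥ v) := by
  simp only [posDef_iff_dotProduct_mulVec, star_trivial,
    dotProduct_smul_one_add_smul_vecMulVec_mulVec]
  constructor
  · rintro ⟨-, hpos⟩
    obtain rfl | hv := eq_or_ne v 0
    · simpa using ha
    have hvv : 0 < v ⬝ᵥ v := by simpa using dotProduct_star_self_pos_iff.mpr hv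
    nlinarith [hpos hv]
  · refine fun h => ⟨by simp [IsHermitian], fun x hx => ?_⟩
    have hxx : 0 < x ⬝ᵥ x := by simpa using dotProduct_star_self_pos_iff.mpr hx
    have cauchy_schwarz : (v ⬝ᵥ x) ^ 2 ≤ (v ⬝ᵥ v) * (x ⬝ᵥ x) := by
      simpa [dotProduct, sq] using Finset.sum_mul_sq_le_sq_mul_sq Finset.univ v x
    rcases le_total 0 b with hb | hb
    · nlinarith [sq_nonneg (v ⬝ᵥ x)]
    · nlinarith

end RankOneUpdate

end Matrix

def finSuccEquivUnitSum (n : ℕ) : Fin (n + 1) ≃ Unit ⊕ Fin n where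
  toFun := Fin.cases (.inl ()) .inr
  invFun := Sum.elim (fun _ => 0) Fin.succ
  left_inv i := by cases i using Fin.cases <;> rfl
  right_inv x := by rcases x with _ | j <;> rfl

theorem block_covariance_posDef_iff_general (T : ℕ) (σμ σx ρ τ' : ℝ)
    (hσμ : 0 < σμ) (hσx : 0 < σx)
    (hρ1 : ρ < 1) :
    (Matrix.of fun i j : Fin (T + 1) =>
        if i = 0 ∧ j = 0 then σμ ^ 2
        else if i = 0 ∨ j = 0 then τ' * σμ * σx
        else σx ^ 2 * (if i = j then 1 else ρ)).PosDef ↔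
      τ' ^ 2 * T < 1 + ((T : ℝ) - 1) * ρ := by
  set A : Matrix Unit Unit ℝ := diagonal fun _ => σμ ^ 2
  set B : Matrix Unit (Fin T) ℝ := of fun _ _ => τ' * σμ * σx
  set D : Matrix (Fin T) (Fin T) ℝ := of fun i j => σx ^ 2 * (if i = j then 1 else ρ)
  have hblocks : (Matrix.of fun i j : Fin (T + 1) =>
        if i = 0 ∧ j = 0 then σμ ^ 2
        else if i = 0 ∨ j = 0 then τ' * σμ * σx
        else σx ^ 2 * (if i = j then 1 else ρ)) =
      (fromBlocks A B Bᴴ D).submatrix (finSuccEquivUnitSum T) (finSuccEquivUnitSum T) := by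
    ext i j
    cases i using Fin.cases <;> cases j using Fin.cases <;>
      simp [A, B, D, finSuccEquivUnitSum, Fin.succ_ne_zero]
  have hA : A.PosDef := posDef_diagonal_iff.2 fun _ => by positivity
  have hAinv : A⁻¹ = of fun _ _ => (σμ ^ 2)⁻¹ :=
    inv_eq_left_inv (by ext; simp [A, mul_apply, hσμ.ne'])
  have hschur : D - Bᴴ * A⁻¹ * B =
      (σx ^ 2 * (1 - ρ)) • 1 + (σx ^ 2 * (ρ - τ' ^ 2)) • vecMulVec 1 1 := by
    ext i j
    by_cases hij : i = j
    · simp [hAinv, B, D, mul_apply, hij]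
      field_simp
      ring
    · simp [hAinv, B, D, mul_apply, hij, one_apply]
      field_simp
  rw [hblocks, posDef_submatrix_equiv, hA.fromBlocks₁₁_iff, hschur,
    posDef_smul_one_add_smul_vecMulVec_iff (mul_pos (by positivity) (sub_pos.2 hρ1)),
    one_dotProduct_one, Fintype.card_fin,
    show σx ^ 2 * (1 - ρ) + σx ^ 2 * (ρ - τ' ^ 2) * T = σx ^ 2 * (1 + (T - 1) * ρ - τ' ^ 2 * T) by
      ring,
    mul_pos_iff_of_pos_left (by positivity), sub_pos]

/-- The `(T+1) × (T+1)` block matrix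
`Σ = [[σμ², τ̃σμσx e'], [τ̃σμσx e, σx² G]]`, with `G = (1-ρ)I + ρee'`, `σμ, σx > 0`,
`-1/(T-1) < ρ < 1`, is positive definite iff `τ̃² T < 1 + (T-1)ρ`. -/
theorem block_covariance_posDef_iff (T : ℕ) (hT : 2 ≤ T) (σμ σx ρ τ' : ℝ)
    (hσμ : 0 < σμ) (hσx : 0 < σx)
    (hρ : -(1 / ((T : ℝ) - 1)) < ρ) (hρ1 : ρ < 1) :
    (Matrix.of fun i j : Fin (T + 1) =>
        if i = 0 ∧ j = 0 then σμ ^ 2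
        else if i = 0 ∨ j = 0 then τ' * σμ * σx
        else σx ^ 2 * (if i = j then 1 else ρ)).PosDef ↔
      τ' ^ 2 * T < 1 + ((T : ℝ) - 1) * ρ :=
  block_covariance_posDef_iff_general T σμ σx ρ τ' hσμ hσx hρ1
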